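/- arXiv:2103.09650 — 2 statements merged into one kernel-verified Lean document; each statement's English description precedes it below -/
import Mathlib

section
/- Let T>0, λ>0 and let 0<m<2π²/(λT). Then for every continuously differentiable T-periodic function ψ:ℝ→ℂ with ∫₀ᵀ|ψ(x)|²dx=m, the energy satisfies E(ψ) := (1/2)∫₀ᵀ|ψ'(x)|²dx − (λ/4)∫₀ᵀ|ψ(x)|⁴dx ≥ −λm²/(4T), and equality holds if and only if ψ is a constant function of the form ψ(x)=√(m/T)·e^{iθ} for some θ∈ℝ. -/
/-!
Write `ρ = |ψ|²` and `g = ρ - m/T`, so that `E(ψ) + λm²/(4T) = (2K - λX)/4` with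
`K = ∫ |ψ'|²` and `X = ∫ g²`. Since `g` has mean zero it has a periodic primitive `V` of mean
zero, and `X = ∫ V' g = -∫ V g'` with `|g'| ≤ 2|ψ||ψ'|`. Weighted AM-GM gives
`X ≤ λ ∫ V² ρ + K/λ`, and `∫ V² ρ = (m/T) ∫ V²` because `∫ V² V' = 0`. Wirtinger's inequality
`∫ V² ≤ (T/2π)² X` (Parseval) then yields `X ≤ (λmT/4π²) X + K/λ`, and `λmT/4π² < 1/2` turns this
into `λX ≤ 2K`, with equality only if `K = 0`, i.e. only if `ψ` is constant.
-/

open MeasureTheory Set Real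

section Wirtinger

theorem ContinuousOn.memLp_two_restrict_Ioc {a b : ℝ} (hab : a ≤ b) {g : ℝ → ℂ}
    (hg : ContinuousOn g (uIcc a b)) : MemLp g 2 (volume.restrict (Ioc a b)) := by
  rw [uIcc_of_le hab] at hg
  rw [memLp_two_iff_integrable_sq_norm
    ((hg.mono Ioc_subset_Icc_self).aestronglyMeasurable measurableSet_Ioc)]
  exact ((hg.norm.pow 2).integrableOn_Icc).mono_set Ioc_subset_Icc_self

open Complex in
theorem norm_fourierCoeffOn_le_of_hasDerivAt {a b : ℝ} (hab : a < b) {f f' : ℝ → ℂ}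
    (hf : ∀ x ∈ uIcc a b, HasDerivAt f (f' x) x) (hf' : ContinuousOn f' (uIcc a b))
    (hfab : f a = f b) {n : ℤ} (hn : n ≠ 0) :
    ‖fourierCoeffOn hab f n‖ ≤ (b - a) / (2 * π) * ‖fourierCoeffOn hab f' n‖ := by
  have hn1 : (1 : ℝ) ≤ |(n : ℝ)| := by exact_mod_cast Int.one_le_abs hn
  rw [fourierCoeffOn_of_hasDerivAt hab hn hf hf'.intervalIntegrable, hfab, sub_self, mul_zero,
    zero_sub, ← ofReal_sub]
  simp only [norm_mul, norm_neg, norm_div, norm_one, norm_real, norm_I, norm_intCast,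
    Real.norm_of_nonneg (sub_pos.2 hab).le, Real.norm_of_nonneg pi_pos.le, Complex.norm_ofNat]
  calc _ = |(n : ℝ)|⁻¹ * ((b - a) / (2 * π) * ‖fourierCoeffOn hab f' n‖) := by ring
    _ ≤ _ := mul_le_of_le_one_left (by positivity) (inv_le_one_of_one_le₀ hn1)

theorem wirtinger_inequality {a b : ℝ} (hab : a < b) {f f' : ℝ → ℂ}
    (hf : ∀ x ∈ uIcc a b, HasDerivAt f (f' x) x) (hf' : ContinuousOn f' (uIcc a b))
    (hfab : f a = f b) (hmean : ∫ x in a..b, f x = 0) :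
    ∫ x in a..b, ‖f x‖ ^ 2 ≤ ((b - a) / (2 * π)) ^ 2 * ∫ x in a..b, ‖f' x‖ ^ 2 := by
  have hfc : ContinuousOn f (uIcc a b) := fun x hx => (hf x hx).continuousAt.continuousWithinAt
  have hcoeff : ∀ n, ‖fourierCoeffOn hab f n‖ ^ 2
      ≤ ((b - a) / (2 * π)) ^ 2 * ‖fourierCoeffOn hab f' n‖ ^ 2 := by
    intro n
    rcases eq_or_ne n 0 with rfl | hn
    · rw [show fourierCoeffOn hab f 0 = 0 by simp [fourierCoeffOn_eq_integral, hmean], norm_zero,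
        zero_pow two_ne_zero]
      positivity
    · rw [← mul_pow]
      gcongr
      exact norm_fourierCoeffOn_le_of_hasDerivAt hab hf hf' hfab hn
  have hparseval := hasSum_le hcoeff
    (hasSum_sq_fourierCoeffOn hab (hfc.memLp_two_restrict_Ioc hab.le))
    ((hasSum_sq_fourierCoeffOn hab (hf'.memLp_two_restrict_Ioc hab.le)).mul_left _)
  rwa [smul_eq_mul, smul_eq_mul, mul_left_comm,
    mul_le_mul_iff_right₀ (inv_pos.2 (sub_pos.2 hab))] at hparseval

theorem wirtinger_inequality_real {a b : ℝ} (hab : a < b) {f f' : ℝ → ℝ}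
    (hf : ∀ x ∈ uIcc a b, HasDerivAt f (f' x) x) (hf' : ContinuousOn f' (uIcc a b))
    (hfab : f a = f b) (hmean : ∫ x in a..b, f x = 0) :
    ∫ x in a..b, f x ^ 2 ≤ ((b - a) / (2 * π)) ^ 2 * ∫ x in a..b, f' x ^ 2 := by
  have h := wirtinger_inequality hab (f := fun x => (f x : ℂ)) (f' := fun x => (f' x : ℂ))
    (fun x hx => (hf x hx).ofReal_comp) (Complex.continuous_ofReal.comp_continuousOn hf')
    (by rw [hfab]) (by rw [intervalIntegral.integral_ofReal, hmean, Complex.ofReal_zero])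
  simpa only [Complex.norm_real, Real.norm_eq_abs, sq_abs] using h

end Wirtinger

section Periodic

variable {T : ℝ}

theorem Function.Periodic.deriv {E : Type*} [NormedAddCommGroup E] [NormedSpace ℝ E] {f : ℝ → E}
    (hf : Function.Periodic f T) : Function.Periodic (deriv f) T := fun x => by
  rw [← deriv_comp_add_const, hf.funext]

theorem Function.Periodic.integral_eq_zero_of_hasDerivAt {E : Type*} [NormedAddCommGroup E]
    [NormedSpace ℝ E] [CompleteSpace E] {F f : ℝ → E} (hF : Function.Periodic F T)
    (hderiv : ∀ x, HasDerivAt F (f x) x) (hf : IntervalIntegrable f volume 0 T) :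
    ∫ x in 0..T, f x = 0 := by
  rw [intervalIntegral.integral_eq_sub_of_hasDerivAt (fun x _ => hderiv x) hf, ← hF 0, zero_add,
    sub_self]

theorem Function.Periodic.integral_mul_deriv_eq_neg {u v u' v' : ℝ → ℝ}
    (hu : Function.Periodic u T) (hv : Function.Periodic v T) (hu' : ∀ x, HasDerivAt u (u' x) x)
    (hv' : ∀ x, HasDerivAt v (v' x) x) (hu'c : Continuous u') (hv'c : Continuous v') :
    ∫ x in 0..T, u x * v' x = -∫ x in 0..T, u' x * v x := by
  have huc : Continuous u := continuous_iff_continuousAt.2 fun x => (hu' x).continuousAt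
  have hvc : Continuous v := continuous_iff_continuousAt.2 fun x => (hv' x).continuousAt
  have h := (hu.mul hv).integral_eq_zero_of_hasDerivAt (fun x => (hu' x).mul (hv' x))
    ((by fun_prop : Continuous fun x => u' x * v x + u x * v' x).intervalIntegrable _ _)
  rw [intervalIntegral.integral_add (f := fun x => u' x * v x) (g := fun x => u x * v' x)
    ((hu'c.mul hvc).intervalIntegrable _ _) ((huc.mul hv'c).intervalIntegrable _ _)] at h
  linarith

theorem Function.Periodic.exists_periodic_hasDerivAt {E : Type*} [NormedAddCommGroup E]
    [NormedSpace ℝ E] [CompleteSpace E] {g : ℝ → E} (hg : Function.Periodic g T)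
    (hgc : Continuous g) (hmean : ∫ x in 0..T, g x = 0) :
    ∃ V : ℝ → E, (∀ x, HasDerivAt V (g x) x) ∧ Function.Periodic V T ∧ ∫ x in 0..T, V x = 0 := by
  set A : ℝ → E := fun x => ∫ t in 0..x, g t
  have hA : ∀ x, HasDerivAt A (g x) x := fun x => (hgc.integral_hasStrictDerivAt 0 x).hasDerivAt
  have hAc : Continuous A := continuous_iff_continuousAt.2 fun x => (hA x).continuousAt
  have hAper : Function.Periodic A T := fun x => by
    simp only [A, hg.intervalIntegral_add_eq_add 0 x fun _ _ => hgc.intervalIntegrable _ _,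
      zero_add, hmean, add_zero]
  refine ⟨fun x => A x - T⁻¹ • ∫ t in 0..T, A t, fun x => (hA x).sub_const _,
    fun x => by simp only [hAper x], ?_⟩
  rcases eq_or_ne T 0 with rfl | hT
  · simp
  · rw [intervalIntegral.integral_sub (hAc.intervalIntegrable _ _) intervalIntegrable_const,
      intervalIntegral.integral_const, sub_zero, smul_inv_smul₀ hT, sub_self]

theorem Function.Periodic.eq_zero_of_integral_eq_zero {f : ℝ → ℝ} (hf : Function.Periodic f T)
    (hT : 0 < T) (hfc : Continuous f) (hnonneg : ∀ x, 0 ≤ f x) (hint : ∫ x in 0..T, f x = 0)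
    (x : ℝ) : f x = 0 := by
  have h : ∫ y in x - T / 2..x - T / 2 + T, f y = 0 := by
    rw [hf.intervalIntegral_add_eq _ 0, zero_add, hint]
  have hae : f =ᵐ[volume.restrict (Ioc (x - T / 2) (x - T / 2 + T))] 0 :=
    (intervalIntegral.integral_eq_zero_iff_of_le_of_nonneg_ae (by linarith)
      (Filter.Eventually.of_forall hnonneg) (hfc.intervalIntegrable _ _)).1 h
  exact Measure.eqOn_open_of_ae_eq (ae_restrict_of_ae_restrict_of_subset Ioo_subset_Ioc_self hae)
    isOpen_Ioo hfc.continuousOn continuousOn_const (show x ∈ Ioo _ _ by constructor <;> linarith)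

theorem integral_sq_eq_integral_sq_sub_mean_add {f : ℝ → ℝ} {m : ℝ} (hT : T ≠ 0)
    (hf : Continuous f) (hmass : ∫ x in 0..T, f x = m) :
    ∫ x in 0..T, f x ^ 2 = (∫ x in 0..T, (f x - m / T) ^ 2) + m ^ 2 / T := by
  have h : ∫ x in 0..T, (f x ^ 2 - (f x - m / T) ^ 2) = 2 * (m / T) * m - (m / T) ^ 2 * T := by
    simp_rw [show ∀ x, f x ^ 2 - (f x - m / T) ^ 2 = 2 * (m / T) * f x - (m / T) ^ 2 from
      fun x => by ring]
    rw [intervalIntegral.integral_sub ((hf.intervalIntegrable _ _).const_mul _)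
      intervalIntegrable_const, intervalIntegral.integral_const_mul, hmass,
      intervalIntegral.integral_const, smul_eq_mul, sub_zero, mul_comm T]
  rw [intervalIntegral.integral_sub
    ((by fun_prop : Continuous fun x => f x ^ 2).intervalIntegrable _ _)
    ((by fun_prop : Continuous fun x => (f x - m / T) ^ 2).intervalIntegrable _ _)] at h
  have hc : 2 * (m / T) * m - (m / T) ^ 2 * T = m ^ 2 / T := by field_simp; ring
  linarith

theorem integral_norm_deriv_sq_eq_zero_iff {E : Type*} [NormedAddCommGroup E] [NormedSpace ℝ E]
    (hT : 0 < T) {ψ : ℝ → E} (hψ : ContDiff ℝ 1 ψ) (hper : Function.Periodic ψ T) :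
    ∫ x in 0..T, ‖deriv ψ x‖ ^ 2 = 0 ↔ ∀ x, ψ x = ψ 0 := by
  have hψ'c : Continuous (deriv ψ) := hψ.continuous_deriv le_rfl
  refine ⟨fun h x => is_const_of_deriv_eq_zero (hψ.differentiable one_ne_zero) (fun y => ?_) x 0,
    fun h => ?_⟩
  · simpa using Function.Periodic.eq_zero_of_integral_eq_zero (f := fun x => ‖deriv ψ x‖ ^ 2)
      (fun x => by simp only [hper.deriv x]) hT (by fun_prop) (fun _ => by positivity) h y
  · rw [funext h]
    simp

end Periodic

section Energy

variable {E : Type*} [NormedAddCommGroup E] [InnerProductSpace ℝ E] {T : ℝ}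

theorem neg_mul_two_inner_le {lam : ℝ} (hlam : 0 < lam) (v : ℝ) (a b : E) :
    -(v * (2 * inner ℝ a b)) ≤ lam * (v ^ 2 * ‖a‖ ^ 2) + lam⁻¹ * ‖b‖ ^ 2 := by
  have hsq : 0 ≤ (lam * (|v| * ‖a‖) - ‖b‖) ^ 2 / lam := by positivity
  calc -(v * (2 * inner ℝ a b)) ≤ 2 * (|v| * |inner ℝ a b|) := by
        rw [← abs_mul]; linarith [neg_abs_le (v * inner ℝ a b)]
    _ ≤ 2 * (|v| * (‖a‖ * ‖b‖)) := by gcongr; exact abs_real_inner_le_norm a b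
    _ = lam * (v ^ 2 * ‖a‖ ^ 2) + lam⁻¹ * ‖b‖ ^ 2 - (lam * (|v| * ‖a‖) - ‖b‖) ^ 2 / lam := by
        rw [← sq_abs v]; field_simp; ring
    _ ≤ _ := by linarith

theorem integral_sq_norm_sq_sub_le_of_hasDerivAt {lam c : ℝ} (hT : 0 ≤ T) (hlam : 0 < lam)
    {ψ : ℝ → E} (hψ : ContDiff ℝ 1 ψ) (hper : Function.Periodic ψ T) {V : ℝ → ℝ}
    (hV : ∀ x, HasDerivAt V (‖ψ x‖ ^ 2 - c) x) (hVper : Function.Periodic V T) :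
    ∫ x in 0..T, (‖ψ x‖ ^ 2 - c) ^ 2
      ≤ lam * c * (∫ x in 0..T, V x ^ 2) + lam⁻¹ * ∫ x in 0..T, ‖deriv ψ x‖ ^ 2 := by
  have hψc : Continuous ψ := hψ.continuous
  have hψ'c : Continuous (deriv ψ) := hψ.continuous_deriv le_rfl
  have hVc : Continuous V := continuous_iff_continuousAt.2 fun x => (hV x).continuousAt
  have hρ' : ∀ x, HasDerivAt (fun y => ‖ψ y‖ ^ 2 - c) (2 * inner ℝ (ψ x) (deriv ψ x)) x :=
    fun x => ((hψ.differentiable one_ne_zero x).hasDerivAt.norm_sq).sub_const c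
  have hparts : ∫ x in 0..T, (‖ψ x‖ ^ 2 - c) ^ 2
      = ∫ x in 0..T, -(V x * (2 * inner ℝ (ψ x) (deriv ψ x))) := by
    rw [intervalIntegral.integral_neg, hVper.integral_mul_deriv_eq_neg
      (fun x => by simp only [hper x]) hV hρ' (by fun_prop) (by fun_prop), neg_neg]
    simp only [sq]
  have hcube : ∫ x in 0..T, V x ^ 2 * (‖ψ x‖ ^ 2 - c) = 0 :=
    Function.Periodic.integral_eq_zero_of_hasDerivAt (F := fun x => V x ^ 3 / 3)
      (fun x => by simp only [hVper x])
      (fun x => (((hV x).fun_pow 3).div_const 3).congr_deriv (by push_cast; ring))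
      ((by fun_prop : Continuous fun x => V x ^ 2 * (‖ψ x‖ ^ 2 - c)).intervalIntegrable _ _)
  have hweight : ∫ x in 0..T, V x ^ 2 * ‖ψ x‖ ^ 2 = c * ∫ x in 0..T, V x ^ 2 := by
    simp_rw [show ∀ x, V x ^ 2 * ‖ψ x‖ ^ 2 = V x ^ 2 * (‖ψ x‖ ^ 2 - c) + c * V x ^ 2 from
      fun x => by ring]
    rw [intervalIntegral.integral_add
      ((by fun_prop : Continuous fun x => V x ^ 2 * (‖ψ x‖ ^ 2 - c)).intervalIntegrable _ _)
      ((by fun_prop : Continuous fun x => c * V x ^ 2).intervalIntegrable _ _), hcube, zero_add,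
      intervalIntegral.integral_const_mul]
  calc _ = _ := hparts
    _ ≤ ∫ x in 0..T, (lam * (V x ^ 2 * ‖ψ x‖ ^ 2) + lam⁻¹ * ‖deriv ψ x‖ ^ 2) :=
      intervalIntegral.integral_mono_on hT (Continuous.intervalIntegrable (by fun_prop) _ _)
        (Continuous.intervalIntegrable (by fun_prop) _ _)
        fun x _ => neg_mul_two_inner_le hlam _ _ _
    _ = _ := by
      rw [intervalIntegral.integral_add (Continuous.intervalIntegrable (by fun_prop) _ _)
        (Continuous.intervalIntegrable (by fun_prop) _ _), intervalIntegral.integral_const_mul,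
        intervalIntegral.integral_const_mul, hweight, mul_assoc]

theorem integral_sq_norm_sq_sub_mean_le {lam m : ℝ} (hT : 0 < T) (hlam : 0 < lam) {ψ : ℝ → E}
    (hψ : ContDiff ℝ 1 ψ) (hper : Function.Periodic ψ T)
    (hmass : ∫ x in 0..T, ‖ψ x‖ ^ 2 = m) :
    ∫ x in 0..T, (‖ψ x‖ ^ 2 - m / T) ^ 2
      ≤ lam * (m / T) * (T / (2 * π)) ^ 2 * (∫ x in 0..T, (‖ψ x‖ ^ 2 - m / T) ^ 2)
        + lam⁻¹ * ∫ x in 0..T, ‖deriv ψ x‖ ^ 2 := by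
  have hψc : Continuous ψ := hψ.continuous
  have hgc : Continuous fun x => ‖ψ x‖ ^ 2 - m / T := by fun_prop
  have hmean : ∫ x in 0..T, (‖ψ x‖ ^ 2 - m / T) = 0 := by
    rw [intervalIntegral.integral_sub
      ((by fun_prop : Continuous fun x => ‖ψ x‖ ^ 2).intervalIntegrable _ _)
      intervalIntegrable_const, hmass, intervalIntegral.integral_const, smul_eq_mul, sub_zero,
      mul_div_cancel₀ _ hT.ne', sub_self]
  obtain ⟨V, hV, hVper, hVmean⟩ :=
    Function.Periodic.exists_periodic_hasDerivAt (fun x => by simp only [hper x]) hgc hmean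
  have hwirt := wirtinger_inequality_real hT (fun x _ => hV x) hgc.continuousOn
    (by simpa using (hVper 0).symm) hVmean
  have hm : 0 ≤ m := hmass ▸ intervalIntegral.integral_nonneg hT.le fun x _ => by positivity
  rw [sub_zero] at hwirt
  calc _ ≤ lam * (m / T) * (∫ x in 0..T, V x ^ 2) + lam⁻¹ * ∫ x in 0..T, ‖deriv ψ x‖ ^ 2 :=
        integral_sq_norm_sq_sub_le_of_hasDerivAt hT.le hlam hψ hper hV hVper
    _ ≤ _ := by rw [mul_assoc _ ((T / (2 * π)) ^ 2)]; gcongr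

end Energy

theorem forall_eq_const_iff_exists_sqrt_mul_exp {T m : ℝ} (hT : T ≠ 0) {ψ : ℝ → ℂ}
    (hmass : ∫ x in 0..T, ‖ψ x‖ ^ 2 = m) :
    (∀ x, ψ x = ψ 0) ↔
      ∃ θ : ℝ, ∀ x, ψ x = (Real.sqrt (m / T) : ℂ) * Complex.exp (θ * Complex.I) := by
  refine ⟨fun h => ⟨(ψ 0).arg, fun x => ?_⟩, fun ⟨θ, h⟩ x => by rw [h x, h 0]⟩
  rw [funext h, intervalIntegral.integral_const, smul_eq_mul, sub_zero] at hmass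
  rw [h x, ← hmass, mul_div_cancel_left₀ _ hT, Real.sqrt_sq (norm_nonneg _),
    Complex.norm_mul_exp_arg_mul_I]

theorem ring_small_mass_constant_ground_state_general
    (T lam m : ℝ) (hT : 0 < T) (hlam : 0 < lam)
    (hm' : m < 2 * Real.pi ^ 2 / (lam * T))
    (ψ : ℝ → ℂ) (hψ : ContDiff ℝ 1 ψ) (hper : Function.Periodic ψ T)
    (hmass : ∫ x in (0:ℝ)..T, ‖ψ x‖ ^ 2 = m) :
    ((1/2) * ∫ x in (0:ℝ)..T, ‖deriv ψ x‖ ^ 2)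
        - (lam/4) * ∫ x in (0:ℝ)..T, ‖ψ x‖ ^ 4
      ≥ - lam * m ^ 2 / (4 * T)
    ∧ ((((1/2) * ∫ x in (0:ℝ)..T, ‖deriv ψ x‖ ^ 2)
        - (lam/4) * ∫ x in (0:ℝ)..T, ‖ψ x‖ ^ 4
      = - lam * m ^ 2 / (4 * T))
      ↔ ∃ θ : ℝ, ∀ x : ℝ,
          ψ x = (Real.sqrt (m / T) : ℂ) * Complex.exp (θ * Complex.I)) := by
  set K := ∫ x in (0:ℝ)..T, ‖deriv ψ x‖ ^ 2
  set X := ∫ x in (0:ℝ)..T, (‖ψ x‖ ^ 2 - m / T) ^ 2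
  have hK : 0 ≤ K := intervalIntegral.integral_nonneg hT.le fun _ _ => by positivity
  have hX : 0 ≤ X := intervalIntegral.integral_nonneg hT.le fun _ _ => by positivity
  have hquartic : ∫ x in (0:ℝ)..T, ‖ψ x‖ ^ 4 = X + m ^ 2 / T := by
    simpa only [← pow_mul] using
      integral_sq_eq_integral_sq_sub_mean_add hT.ne' (by fun_prop) hmass
  have hsmall : lam * (m / T) * (T / (2 * π)) ^ 2 < 1 / 2 := by
    rw [lt_div_iff₀ (by positivity)] at hm'
    field_simp
    nlinarith
  set A := lam * (m / T) * (T / (2 * π)) ^ 2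
  have hkey : lam * X ≤ lam * A * X + K := by
    have := mul_le_mul_of_nonneg_left (integral_sq_norm_sq_sub_mean_le hT hlam hψ hper hmass)
      hlam.le
    rwa [mul_add, mul_inv_cancel_left₀ hlam.ne', ← mul_assoc] at this
  have henergy : 1 / 2 * K - lam / 4 * (X + m ^ 2 / T) - (-lam * m ^ 2 / (4 * T))
      = (2 * K - lam * X) / 4 := by
    field_simp; ring
  have hgap : 0 < lam * (1 / 2 - A) := by nlinarith
  rw [hquartic]
  refine ⟨by nlinarith, ?_⟩
  calc _ ↔ K = 0 := ⟨fun h => by nlinarith, fun h => by nlinarith⟩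
    _ ↔ ∀ x, ψ x = ψ 0 := integral_norm_deriv_sq_eq_zero_iff hT hψ hper
    _ ↔ _ := forall_eq_const_iff_exists_sqrt_mul_exp hT.ne' hmass

/-- For `T > 0`, `λ > 0` and `0 < m < 2π²/(λT)`, every `C¹` `T`-periodic
function `ψ : ℝ → ℂ` of mass `m` has energy at least `-λ m² / (4T)`, with equality
iff `ψ` is the constant `√(m/T) e^{iθ}` for some `θ ∈ ℝ`. -/
theorem ring_small_mass_constant_ground_state
    (T lam m : ℝ) (hT : 0 < T) (hlam : 0 < lam)
    (hm : 0 < m) (hm' : m < 2 * Real.pi ^ 2 / (lam * T))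
    (ψ : ℝ → ℂ) (hψ : ContDiff ℝ 1 ψ) (hper : Function.Periodic ψ T)
    (hmass : ∫ x in (0:ℝ)..T, ‖ψ x‖ ^ 2 = m) :
    ((1/2) * ∫ x in (0:ℝ)..T, ‖deriv ψ x‖ ^ 2)
        - (lam/4) * ∫ x in (0:ℝ)..T, ‖ψ x‖ ^ 4
      ≥ - lam * m ^ 2 / (4 * T)
    ∧ ((((1/2) * ∫ x in (0:ℝ)..T, ‖deriv ψ x‖ ^ 2)
        - (lam/4) * ∫ x in (0:ℝ)..T, ‖ψ x‖ ^ 4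
      = - lam * m ^ 2 / (4 * T))
      ↔ ∃ θ : ℝ, ∀ x : ℝ,
          ψ x = (Real.sqrt (m / T) : ℂ) * Complex.exp (θ * Complex.I)) :=
  ring_small_mass_constant_ground_state_general T lam m hT hlam hm' ψ hψ hper hmass
end

section
/- Let T>0, λ>0 and let m>2π²/(λT). Then there exists a continuously differentiable T-periodic function ψ:ℝ→ℂ with ∫₀ᵀ|ψ(x)|²dx=m whose energy is strictly smaller than that of the constant: E(ψ) := (1/2)∫₀ᵀ|ψ'(x)|²dx − (λ/4)∫₀ᵀ|ψ(x)|⁴dx < −λm²/(4T). In particular, above the mass threshold 2π²/(λT) the constant function √(m/T) is no longer a minimizer of the energy at fixed mass. -/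
/-!
Perturb the constant along the first Fourier mode: `ψ = a + b cos (2πx/T)` has mass
`(a² + b²/2) T` and satisfies
`E(ψ) + λ M(ψ)² / (4T) = b²/(4T) · (4π² - λT² (2a² + b²/8))`.
At fixed mass `m` we have `2a² + b²/8 = 2m/T - 7b²/8`, so when `λTm > 2π²` a small `b ≠ 0`
makes the right-hand side negative. (The complex mode `b e^{2πix/T}` would only give the
threshold `4π²/(λT)`.)
-/

open Real intervalIntegral Finset

lemma integral_add_mul_pow {f : ℝ → ℝ} (hf : Continuous f) (a b α β : ℝ) (n : ℕ) :
    ∫ x in α..β, (a + b * f x) ^ n =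
      ∑ i ∈ range (n + 1), a ^ (n - i) * b ^ i * n.choose i * ∫ x in α..β, f x ^ i := by
  simp_rw [add_comm a, add_pow]
  rw [intervalIntegral.integral_finsetSum fun i _ => by
    apply Continuous.intervalIntegrable; fun_prop]
  refine sum_congr rfl fun i _ => ?_
  rw [← intervalIntegral.integral_const_mul]
  congr 1 with x
  ring

lemma integral_cos_pow_add_two_zero_two_pi (n : ℕ) :
    ∫ x in (0)..2 * π, cos x ^ (n + 2) = (n + 1) / (n + 2) * ∫ x in (0)..2 * π, cos x ^ n := by
  simp [integral_cos_pow]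

lemma integral_add_mul_cos_sq_zero_two_pi (a b : ℝ) :
    ∫ x in (0)..2 * π, (a + b * cos x) ^ 2 = 2 * π * (a ^ 2 + b ^ 2 / 2) := by
  simp [integral_add_mul_pow continuous_cos, sum_range_succ]
  ring

lemma integral_add_mul_cos_pow_four_zero_two_pi (a b : ℝ) :
    ∫ x in (0)..2 * π, (a + b * cos x) ^ 4 =
      2 * π * (a ^ 4 + 3 * a ^ 2 * b ^ 2 + 3 * b ^ 4 / 8) := by
  simp [integral_add_mul_pow continuous_cos, sum_range_succ,
    integral_cos_pow_add_two_zero_two_pi, Nat.choose]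
  ring

lemma integral_comp_two_pi_div_mul {T : ℝ} (hT : T ≠ 0) (g : ℝ → ℝ) :
    ∫ x in (0)..T, g (2 * π / T * x) = T / (2 * π) * ∫ x in (0)..2 * π, g x := by
  rw [integral_comp_mul_left g (by positivity), smul_eq_mul, mul_zero, div_mul_cancel₀ _ hT]
  field_simp

noncomputable def nlsMass (T : ℝ) (ψ : ℝ → ℂ) : ℝ :=
  ∫ x in (0)..T, ‖ψ x‖ ^ 2

noncomputable def nlsEnergy (T lam : ℝ) (ψ : ℝ → ℂ) : ℝ :=
  (1 / 2) * (∫ x in (0)..T, ‖deriv ψ x‖ ^ 2) - (lam / 4) * ∫ x in (0)..T, ‖ψ x‖ ^ 4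

noncomputable def cosineProfile (T a b x : ℝ) : ℝ :=
  a + b * cos (2 * π / T * x)

section cosineProfile

variable {T : ℝ} (a b : ℝ)

lemma contDiff_cosineProfile {n : WithTop ℕ∞} : ContDiff ℝ n (cosineProfile T a b) := by
  unfold cosineProfile; fun_prop

lemma periodic_cosineProfile (hT : T ≠ 0) : Function.Periodic (cosineProfile T a b) T := by
  intro x
  simp only [cosineProfile, mul_add, div_mul_cancel₀ _ hT, cos_add_two_pi]

lemma hasDerivAt_cosineProfile (x : ℝ) :
    HasDerivAt (cosineProfile T a b) (-(b * (2 * π / T)) * sin (2 * π / T * x)) x := by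
  refine ((((hasDerivAt_id x).const_mul (2 * π / T)).cos.const_mul b).const_add a).congr_deriv ?_
  simp only [id, mul_one]
  ring

lemma integral_cosineProfile_sq (hT : T ≠ 0) :
    ∫ x in (0)..T, cosineProfile T a b x ^ 2 = (a ^ 2 + b ^ 2 / 2) * T := by
  unfold cosineProfile
  rw [integral_comp_two_pi_div_mul hT (fun y => (a + b * cos y) ^ 2),
    integral_add_mul_cos_sq_zero_two_pi]
  field_simp

lemma integral_cosineProfile_pow_four (hT : T ≠ 0) :
    ∫ x in (0)..T, cosineProfile T a b x ^ 4 = (a ^ 4 + 3 * a ^ 2 * b ^ 2 + 3 * b ^ 4 / 8) * T := by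
  unfold cosineProfile
  rw [integral_comp_two_pi_div_mul hT (fun y => (a + b * cos y) ^ 4),
    integral_add_mul_cos_pow_four_zero_two_pi]
  field_simp

lemma integral_deriv_cosineProfile_sq (hT : T ≠ 0) :
    ∫ x in (0)..T, deriv (cosineProfile T a b) x ^ 2 = 2 * π ^ 2 * b ^ 2 / T := by
  simp_rw [(hasDerivAt_cosineProfile a b _).deriv]
  rw [integral_comp_two_pi_div_mul hT (fun y => (-(b * (2 * π / T)) * sin y) ^ 2)]
  simp_rw [mul_pow]
  rw [intervalIntegral.integral_const_mul, integral_sin_sq]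
  simp only [even_two, Even.neg_pow, sin_zero, cos_zero, sin_two_pi, cos_two_pi, mul_one,
    sub_self, zero_add, sub_zero]
  field_simp

lemma nlsMass_cosineProfile (hT : T ≠ 0) :
    nlsMass T (fun x => cosineProfile T a b x) = (a ^ 2 + b ^ 2 / 2) * T := by
  simp only [nlsMass, Complex.norm_real, Real.norm_eq_abs, sq_abs, integral_cosineProfile_sq a b hT]

lemma nlsEnergy_cosineProfile (hT : T ≠ 0) (lam : ℝ) :
    nlsEnergy T lam (fun x => cosineProfile T a b x) =
      π ^ 2 * b ^ 2 / T - lam / 4 * (a ^ 4 + 3 * a ^ 2 * b ^ 2 + 3 * b ^ 4 / 8) * T := by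
  have hderiv (x : ℝ) :
      deriv (fun y => (cosineProfile T a b y : ℂ)) x = deriv (cosineProfile T a b) x := by
    rw [(hasDerivAt_cosineProfile a b x).ofReal_comp.deriv, (hasDerivAt_cosineProfile a b x).deriv]
  have hpow4 (r : ℝ) : |r| ^ 4 = r ^ 4 := (even_two_mul 2).pow_abs r
  simp only [nlsEnergy, hderiv, Complex.norm_real, Real.norm_eq_abs, sq_abs, hpow4,
    integral_deriv_cosineProfile_sq a b hT, integral_cosineProfile_pow_four a b hT]
  ring

lemma nlsEnergy_cosineProfile_eq_constant_add (hT : T ≠ 0) (lam : ℝ) :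
    nlsEnergy T lam (fun x => cosineProfile T a b x) =
      -lam * nlsMass T (fun x => cosineProfile T a b x) ^ 2 / (4 * T) +
        b ^ 2 / (4 * T) * (4 * π ^ 2 - lam * T ^ 2 * (2 * a ^ 2 + b ^ 2 / 8)) := by
  rw [nlsEnergy_cosineProfile a b hT, nlsMass_cosineProfile a b hT]
  field_simp
  ring

end cosineProfile

lemma exists_cosineProfile_coeffs {T lam m : ℝ} (hT : 0 < T) (hlam : 0 < lam)
    (hm : 2 * π ^ 2 / (lam * T) < m) :
    ∃ a b : ℝ, b ≠ 0 ∧ (a ^ 2 + b ^ 2 / 2) * T = m ∧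
      4 * π ^ 2 < lam * T ^ 2 * (2 * a ^ 2 + b ^ 2 / 8) := by
  set c := 2 * π ^ 2 / (lam * T) with hc_def
  have hc : 0 < c := by positivity
  have hlamTc : lam * T * c = 2 * π ^ 2 := by rw [hc_def]; field_simp
  have ha : (√((m + c) / (2 * T))) ^ 2 = (m + c) / (2 * T) :=
    sq_sqrt (div_nonneg (by linarith) (by positivity))
  have hb : (√((m - c) / T)) ^ 2 = (m - c) / T := sq_sqrt (div_nonneg (by linarith) hT.le)
  refine ⟨√((m + c) / (2 * T)), √((m - c) / T), ?_, ?_, ?_⟩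
  · exact (sqrt_pos.2 (div_pos (by linarith) hT)).ne'
  · rw [ha, hb]; field_simp; ring
  · rw [ha, hb]
    have hlamTm : lam * T * c < lam * T * m := by gcongr
    field_simp
    nlinarith

/-- For `T > 0`, `λ > 0` and `m > 2π²/(λT)`, there exists a `C¹`
`T`-periodic function `ψ : ℝ → ℂ` of mass `m` whose energy is strictly smaller
than `-λ m² / (4T)`, the energy of the constant of the same mass. -/
theorem ring_large_mass_constant_not_minimizer
    (T lam m : ℝ) (hT : 0 < T) (hlam : 0 < lam)
    (hm : 2 * Real.pi ^ 2 / (lam * T) < m) :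
    ∃ ψ : ℝ → ℂ, ContDiff ℝ 1 ψ ∧ Function.Periodic ψ T ∧
      (∫ x in (0:ℝ)..T, ‖ψ x‖ ^ 2) = m ∧
      ((1/2) * ∫ x in (0:ℝ)..T, ‖deriv ψ x‖ ^ 2)
          - (lam/4) * ∫ x in (0:ℝ)..T, ‖ψ x‖ ^ 4
        < - lam * m ^ 2 / (4 * T) := by
  obtain ⟨a, b, hb, hmass, hgap⟩ := exists_cosineProfile_coeffs hT hlam hm
  have hM : nlsMass T (fun x => cosineProfile T a b x) = m := by
    rw [nlsMass_cosineProfile a b hT.ne', hmass]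
  have hcorrection : b ^ 2 / (4 * T) * (4 * π ^ 2 - lam * T ^ 2 * (2 * a ^ 2 + b ^ 2 / 8)) < 0 :=
    mul_neg_of_pos_of_neg (by positivity) (by linarith)
  refine ⟨fun x => cosineProfile T a b x,
    Complex.ofRealCLM.contDiff.comp (contDiff_cosineProfile a b),
    (periodic_cosineProfile a b hT.ne').comp ((↑) : ℝ → ℂ), hM, ?_⟩
  change nlsEnergy T lam _ < _
  rw [nlsEnergy_cosineProfile_eq_constant_add a b hT.ne', hM]
  exact add_lt_of_neg_right _ hcorrection
end
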